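/- Theorem 3.1 in subset-expansion (Whitney) form. Let E be an integral gain graph on vertex set {1,…,n} and let m ≥ 0 be an integer. Then the number of proper maps x : {1,…,n} → {1,2,…,m} equals ∑_{S ⊆ E, S balanced} (−1)^{|S|} · ∏_{W ∈ π(S)} (m − h_S(W))⁺, where the sum is over all balanced subsets S of E. -/

import Mathlib

open Finset
open scoped Classical

/-!
Inclusion–exclusion over the edges a colouring violates writes the number of proper
colourings as `∑_{S ⊆ E} (-1)^|S|` times the number of colourings in `{1, …, m}ⁿ` that are
potentials of `S`.
There are none unless `S` is balanced; if `θ` is a potential of `S`, the others are `θ + c` with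
`c` constant on each block `W` of `π(S)`, and the colouring stays in `{1, …, m}` exactly when the
shift on `W` lies in an interval with `(m - h_S(W))⁺` integer points.
-/

/-- An edge of an integral gain graph on `Fin n`: the triple `(i, j, g)` represents an edge
from `i` to `j` with gain `g`. -/
abbrev GainEdge (n : ℕ) := Fin n × Fin n × ℤ

/-- `θ` is a potential for the edge set `S`: `θ j - θ i = g` for every edge `(i, j, g) ∈ S`. -/
def IsPotential {n : ℕ} (S : Finset (GainEdge n)) (θ : Fin n → ℤ) : Prop :=
  ∀ e ∈ S, θ e.2.1 - θ e.1 = e.2.2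

/-- An edge set is balanced if it admits a potential. -/
def IsBalanced {n : ℕ} (S : Finset (GainEdge n)) : Prop :=
  ∃ θ : Fin n → ℤ, IsPotential S θ

/-- Two vertices lie in the same connected component of (the underlying graph of) `S`. -/
def SameComp {n : ℕ} (S : Finset (GainEdge n)) (u v : Fin n) : Prop :=
  Relation.EqvGen (fun a b => ∃ g : ℤ, (a, b, g) ∈ S) u v

/-- The partition `π(S)` of the vertex set into the connected components of `S`,
represented as the finite set of its blocks. -/
noncomputable def blocks {n : ℕ} (S : Finset (GainEdge n)) : Finset (Finset (Fin n)) :=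
  Finset.univ.image fun v => Finset.univ.filter fun u => SameComp S u v

/-- A balanced edge set `B ⊆ E` is closed (in `E`) if adjoining to `B` any edge of `E ∖ B` whose
endpoints lie in the same block of `π(B)` destroys balance. -/
def GGClosed {n : ℕ} (E B : Finset (GainEdge n)) : Prop :=
  ∀ e ∈ E \ B, SameComp B e.1 e.2.1 → ¬ IsBalanced (insert e B)

/-- The poset `Lat^b(E)` of closed balanced subsets of `E` (as a finite set, ordered by
inclusion). -/
noncomputable def Latb {n : ℕ} (E : Finset (GainEdge n)) : Finset (Finset (GainEdge n)) :=
  E.powerset.filter fun B => IsBalanced B ∧ GGClosed E B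

/-- A coloration `x` is proper for `E` if `x j ≠ x i + g` for every edge `(i, j, g) ∈ E`. -/
def ProperFor {n : ℕ} (E : Finset (GainEdge n)) (x : Fin n → ℤ) : Prop :=
  ∀ e ∈ E, x e.2.1 ≠ x e.1 + e.2.2

/-- The number of proper colorations of `E` with colors in `{1, …, m}`. -/
noncomputable def properCount {n : ℕ} (E : Finset (GainEdge n)) (m : ℤ) : ℕ :=
  Nat.card {x : Fin n → ℤ // (∀ v, 1 ≤ x v ∧ x v ≤ m) ∧ ProperFor E x}

theorem card_filter_eq_card_filter_univ {α : Type*} (s : Finset α) (p : α → Prop)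
    [DecidablePred p] :
    #(s.filter p) = #((univ : Finset s).filter fun x => p x.1) := by
  rw [univ_eq_attach, filter_attach, card_map, card_attach]

theorem card_filter_properFor {n : ℕ} (E : Finset (GainEdge n)) (B : Finset (Fin n → ℤ)) :
    (#(B.filter (ProperFor E)) : ℤ) =
      ∑ S ∈ E.powerset, (-1 : ℤ) ^ #S * #(B.filter (IsPotential S)) := by
  let V : GainEdge n → Finset B := fun e => univ.filter fun x => x.1 e.2.1 - x.1 e.1 = e.2.2
  have hV : ∀ S, S.inf V = univ.filter fun x => IsPotential S x.1 := fun S => by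
    ext x; simp [V, IsPotential, Finset.mem_inf]
  have hVc : (E.inf fun e => (V e)ᶜ) = univ.filter fun x => ProperFor E x.1 := by
    ext x; simp [V, ProperFor, Finset.mem_inf, sub_eq_iff_eq_add']
  simp only [card_filter_eq_card_filter_univ B, ← hV, ← hVc]
  exact inclusion_exclusion_card_inf_compl E V

noncomputable def colorBox (n : ℕ) (m : ℤ) : Finset (Fin n → ℤ) :=
  Fintype.piFinset fun _ => Icc 1 m

theorem properCount_eq_card {n : ℕ} (E : Finset (GainEdge n)) (m : ℤ) :
    properCount E m = #((colorBox n m).filter (ProperFor E)) := by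
  rw [properCount, ← Nat.card_eq_finsetCard]
  refine Nat.card_congr (Equiv.subtypeEquivRight fun x => ?_)
  simp [colorBox, Fintype.mem_piFinset]

theorem forall_add_mem_Icc_iff {ι : Type*} {W : Finset ι} (hW : W.Nonempty) (θ : ι → ℤ)
    (c a b : ℤ) :
    (∀ v ∈ W, θ v + c ∈ Icc a b) ↔ c ∈ Icc (a - W.inf' hW θ) (b - W.sup' hW θ) := by
  rw [mem_Icc, sub_le_comm, le_sub_comm, le_inf'_iff, sup'_le_iff, ← forall₂_and]
  exact forall₂_congr fun v _ => by rw [mem_Icc]; omega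

section Components

variable {n : ℕ} {S : Finset (GainEdge n)}

theorem SameComp.of_mem {e : GainEdge n} (he : e ∈ S) : SameComp S e.1 e.2.1 :=
  .rel _ _ ⟨e.2.2, he⟩

variable (S) in
theorem sameComp_equivalence : Equivalence (SameComp S) :=
  ⟨.refl, .symm _ _, .trans _ _ _⟩

variable (S) in
def componentSetoid : Setoid (Fin n) := ⟨SameComp S, sameComp_equivalence S⟩

variable (S) in
noncomputable def component (q : Quotient (componentSetoid S)) : Finset (Fin n) :=
  univ.filter fun v => Quotient.mk _ v = q

theorem mem_component {q : Quotient (componentSetoid S)} {v : Fin n} :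
    v ∈ component S q ↔ Quotient.mk _ v = q := by
  simp [component]

theorem component_nonempty (q : Quotient (componentSetoid S)) : (component S q).Nonempty :=
  q.inductionOn fun v => ⟨v, mem_component.2 rfl⟩

theorem component_injective : Function.Injective (component S) := fun q q' h => by
  obtain ⟨v, hv⟩ := component_nonempty q
  exact (mem_component.1 hv).symm.trans (mem_component.1 (h ▸ hv))

theorem blocks_eq_image_component : blocks S = univ.image (component S) := by
  rw [blocks, ← image_univ_of_surjective Quotient.mk_surjective, image_image]
  congr 1; ext v : 1
  ext u; simp [component, Quotient.eq]; rfl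

theorem IsPotential.sub_eq_sub_of_sameComp {x θ : Fin n → ℤ} (hx : IsPotential S x)
    (hθ : IsPotential S θ) {u v : Fin n} (h : SameComp S u v) : x u - θ u = x v - θ v := by
  induction h with
  | rel a b hab =>
    obtain ⟨g, hg⟩ := hab
    linarith [hx _ hg, hθ _ hg]
  | refl => rfl
  | symm _ _ _ ih => exact ih.symm
  | trans _ _ _ _ _ ih₁ ih₂ => exact ih₁.trans ih₂

theorem IsPotential.add_comp_mk {θ : Fin n → ℤ} (hθ : IsPotential S θ)
    (c : Quotient (componentSetoid S) → ℤ) :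
    IsPotential S fun v => θ v + c (Quotient.mk _ v) := fun e he => by
  have : (Quotient.mk _ e.2.1 : Quotient (componentSetoid S)) = Quotient.mk _ e.1 :=
    Quotient.sound (SameComp.of_mem he).symm
  simp only [this]
  linarith [hθ e he]

end Components

noncomputable def spread {ι : Type*} (θ : ι → ℤ) (W : Finset ι) : ℤ :=
  if h : W.Nonempty then W.sup' h θ - W.inf' h θ else 0

theorem card_filter_isPotential_eq_card_piFinset {n : ℕ} {S : Finset (GainEdge n)}
    {θ : Fin n → ℤ} (hθ : IsPotential S θ) (m : ℤ) :
    #((colorBox n m).filter (IsPotential S)) =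
      #(Fintype.piFinset fun q => Icc (1 - (component S q).inf' (component_nonempty q) θ)
        (m - (component S q).sup' (component_nonempty q) θ)) := by
  have h_shift {q : Quotient (componentSetoid S)} {c} :=
    (forall_add_mem_Icc_iff (component_nonempty q) θ c 1 m).symm
  have h_out (v : Fin n) : SameComp S v (Quotient.mk (componentSetoid S) v).out :=
    sameComp_equivalence S |>.symm (Quotient.mk_out (s := componentSetoid S) v)
  refine card_nbij' (fun x q => x q.out - θ q.out) (fun c v => θ v + c (Quotient.mk _ v))
    ?_ ?_ ?_ ?_
  · intro x hx
    simp only [mem_coe, mem_filter, colorBox, Fintype.mem_piFinset] at hx ⊢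
    refine fun q => h_shift.2 fun v hv => ?_
    rw [← hx.2.sub_eq_sub_of_sameComp hθ (mem_component.1 hv ▸ h_out v)]
    simpa using hx.1 v
  · intro c hc
    simp only [mem_coe, mem_filter, colorBox, Fintype.mem_piFinset] at hc ⊢
    exact ⟨fun v => h_shift.1 (hc _) v (mem_component.2 rfl), hθ.add_comp_mk c⟩
  · intro x hx
    funext v
    have := (mem_filter.1 hx).2.sub_eq_sub_of_sameComp hθ (h_out v)
    simp only; omega
  · intro c _
    funext q
    simp [Quotient.out_eq]

theorem card_filter_isPotential {n : ℕ} {S : Finset (GainEdge n)} {θ : Fin n → ℤ}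
    (hθ : IsPotential S θ) (m : ℤ) :
    (#((colorBox n m).filter (IsPotential S)) : ℤ) =
      ∏ W ∈ blocks S, max (m - spread θ W) 0 := by
  rw [card_filter_isPotential_eq_card_piFinset hθ, Fintype.card_piFinset,
    blocks_eq_image_component, prod_image component_injective.injOn]
  push_cast
  refine prod_congr rfl fun q _ => ?_
  rw [Int.card_Icc, spread, dif_pos (component_nonempty q), Int.toNat_eq_max]
  ring_nf

theorem nonempty_of_mem_blocks {n : ℕ} {S : Finset (GainEdge n)} {W : Finset (Fin n)}
    (hW : W ∈ blocks S) : W.Nonempty := by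
  rw [blocks_eq_image_component, mem_image] at hW
  obtain ⟨q, -, rfl⟩ := hW
  exact component_nonempty q

theorem integral_expansion_whitney_general (n : ℕ) (E : Finset (GainEdge n))
    (m : ℤ)
    (ht : Finset (GainEdge n) → Finset (Fin n) → ℤ)
    (hht : ∀ S ∈ E.powerset, IsBalanced S → ∀ θ : Fin n → ℤ, IsPotential S θ →
      ∀ W ∈ blocks S, ∀ hW : W.Nonempty, ht S W = W.sup' hW θ - W.inf' hW θ) :
    (properCount E m : ℤ) =
      ∑ S ∈ E.powerset.filter IsBalanced,
        (-1 : ℤ) ^ S.card * ∏ W ∈ blocks S, max (m - ht S W) 0 := by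
  have h_unbalanced (S : Finset (GainEdge n)) (hS : ¬IsBalanced S) :
      (colorBox n m).filter (IsPotential S) = ∅ :=
    filter_eq_empty_iff.2 fun x _ hx => hS ⟨x, hx⟩
  rw [properCount_eq_card, card_filter_properFor, ← sum_filter_of_ne (p := IsBalanced)
    fun S _ hne => by by_contra hS; simp [h_unbalanced S hS] at hne]
  refine sum_congr rfl fun S hS => ?_
  obtain ⟨hSE, θ, hθ⟩ := mem_filter.1 hS
  rw [card_filter_isPotential hθ]
  refine congrArg _ (prod_congr rfl fun W hW => ?_)
  have hW' := nonempty_of_mem_blocks hW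
  rw [spread, dif_pos hW', hht S hSE ⟨θ, hθ⟩ θ hθ W hW hW']

/-- **Theorem 3.1 in subset-expansion (Whitney) form.**  For an integral gain graph `E` on
`{1, …, n}` and an integer `m ≥ 0`, the number of proper colorations with colors in `{1, …, m}`
equals `∑_{S ⊆ E balanced} (−1)^{|S|} ∏_{W ∈ π(S)} (m − h_S(W))⁺`.  Here `ht S W` is the
height `h_S(W) = max_{v ∈ W} θ v − min_{v ∈ W} θ v` for any potential `θ` of `S`
(characterized by `hht`). -/
theorem integral_expansion_whitney (n : ℕ) (E : Finset (GainEdge n))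
    (hE : ∀ e ∈ E, e.1 < e.2.1)
    (m : ℤ) (hm : 0 ≤ m)
    (ht : Finset (GainEdge n) → Finset (Fin n) → ℤ)
    (hht : ∀ S ∈ E.powerset, IsBalanced S → ∀ θ : Fin n → ℤ, IsPotential S θ →
      ∀ W ∈ blocks S, ∀ hW : W.Nonempty, ht S W = W.sup' hW θ - W.inf' hW θ) :
    (properCount E m : ℤ) =
      ∑ S ∈ E.powerset.filter IsBalanced,
        (-1 : ℤ) ^ S.card * ∏ W ∈ blocks S, max (m - ht S W) 0 :=
  integral_expansion_whitney_general n E m ht hht
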